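/- arXiv:2009.12686 — 2 statements merged into one kernel-verified Lean document; each statement's English description precedes it below -/
import Mathlib

section
/- Let A be a symmetric positive semidefinite r×r real matrix, let u, w ∈ ℝ^r with s₀ := uᵀ A u > 0, and let (p_v)_{v≥0} be a sequence of reals with 0 ≤ p_v ≤ 1 for all v. Define q(ε) = (u + ε·w)ᵀ A (u + ε·w) and β(ε) = Σ_{v=0}^∞ (q(ε)/2)^v / v! · e^{−q(ε)/2} · p_v. Then β is differentiable at ε = 0 and β'(0) = C*(s₀) · (uᵀ A w), where C*(s) = e^{−s/2} · Σ_{v=0}^∞ s^{v−1} · 2^{−v} · (2v − s) · p_v / v!. -/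
/-!
The power is `β = g ∘ q` with `q ε = (u + ε • w) ⬝ᵥ A *ᵥ (u + ε • w)` and
`g s = ∑ v, (s/2)^v / v! * e^{-s/2} * p v`. Because `p` is bounded, on every ball the termwise
derivatives of `g` are dominated by a summable series (essentially the exponential series), so
`g` is differentiable termwise at every `s`. By symmetry of `A`, `q' 0 = 2 * (u ⬝ᵥ A *ᵥ w)`, and the
chain rule gives the result once `g' s₀` is rewritten in the paper's form
`e^{-s/2} ∑ s^{v-1} 2^{-v} (2v - s) p_v / v! / 2`, which is valid because `s₀ ≠ 0`.
-/

open Matrix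

namespace Matrix

variable {n R : Type*} [Fintype n] [CommSemiring R]

theorem IsSymm.dotProduct_mulVec_comm {A : Matrix n n R} (hA : A.IsSymm) (u w : n → R) :
    w ⬝ᵥ A *ᵥ u = u ⬝ᵥ A *ᵥ w := by
  rw [dotProduct_mulVec, dotProduct_comm, ← mulVec_transpose, hA.eq]

theorem add_smul_dotProduct_mulVec_add_smul (A : Matrix n n R) (u w : n → R) (ε : R) :
    (u + ε • w) ⬝ᵥ A *ᵥ (u + ε • w) =
      u ⬝ᵥ A *ᵥ u + ε * (u ⬝ᵥ A *ᵥ w + w ⬝ᵥ A *ᵥ u) + ε ^ 2 * (w ⬝ᵥ A *ᵥ w) := by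
  simp only [mulVec_add, mulVec_smul, add_dotProduct, dotProduct_add, smul_dotProduct,
    dotProduct_smul, smul_eq_mul]
  ring

end Matrix

theorem hasDerivAt_add_smul_dotProduct_mulVec_add_smul {n 𝕜 : Type*} [Fintype n]
    [NontriviallyNormedField 𝕜] (A : Matrix n n 𝕜) (u w : n → 𝕜) :
    HasDerivAt (fun ε : 𝕜 => (u + ε • w) ⬝ᵥ A *ᵥ (u + ε • w))
      (u ⬝ᵥ A *ᵥ w + w ⬝ᵥ A *ᵥ u) 0 := by
  simp_rw [add_smul_dotProduct_mulVec_add_smul]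
  refine (((hasDerivAt_id (0 : 𝕜)).mul_const (u ⬝ᵥ A *ᵥ w + w ⬝ᵥ A *ᵥ u)).const_add
    (u ⬝ᵥ A *ᵥ u) |>.add ((hasDerivAt_pow 2 (0 : 𝕜)).mul_const (w ⬝ᵥ A *ᵥ w))).congr_deriv ?_
  simp

theorem summable_natCast_mul_pow_pred_div_factorial (x : ℝ) :
    Summable (fun v : ℕ => (v : ℝ) * x ^ (v - 1) / v.factorial) := by
  rw [← summable_nat_add_iff 1]
  refine (Real.summable_pow_div_factorial x).congr fun v => ?_
  rw [Nat.factorial_succ, Nat.add_sub_cancel]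
  push_cast
  field_simp

theorem natCast_mul_half_pow_pred_sub_half_pow {s : ℝ} (hs : s ≠ 0) (v : ℕ) :
    (v : ℝ) * (s / 2) ^ (v - 1) - (s / 2) ^ v =
      s ^ ((v : ℤ) - 1) * 2 ^ (-(v : ℤ)) * (2 * v - s) := by
  rw [zpow_sub_one₀ hs, _root_.zpow_neg, zpow_natCast, zpow_natCast]
  cases v with
  | zero => simp [hs]
  | succ v =>
    rw [Nat.add_sub_cancel, div_pow, div_pow, pow_succ, pow_succ]
    push_cast
    field_simp

/-- The Poisson(`s/2`) mass at `v`: the noncentral `χ²_r` law with noncentrality `s` is the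
Poisson(`s/2`) mixture of the `χ²_{r+2v}`, whence the shape of `β`. -/
noncomputable def poissonWeight (s : ℝ) (v : ℕ) : ℝ :=
  (s / 2) ^ v / v.factorial * Real.exp (-s / 2)

noncomputable def poissonWeightDeriv (s : ℝ) (v : ℕ) : ℝ :=
  ((v : ℝ) * (s / 2) ^ (v - 1) - (s / 2) ^ v) / v.factorial * Real.exp (-s / 2) / 2

theorem hasDerivAt_poissonWeight (v : ℕ) (s : ℝ) :
    HasDerivAt (poissonWeight · v) (poissonWeightDeriv s v) s := by
  have h := ((((hasDerivAt_id s).div_const 2).pow v).div_const (v.factorial : ℝ)).mul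
    ((hasDerivAt_id s).neg.div_const 2).exp
  refine h.congr_deriv ?_
  simp only [poissonWeightDeriv, id, Pi.pow_apply, Pi.neg_apply]
  ring

theorem abs_poissonWeightDeriv_le {s R : ℝ} (hs : |s| ≤ R) (v : ℕ) :
    |poissonWeightDeriv s v| ≤
      ((v : ℝ) * (R / 2) ^ (v - 1) + (R / 2) ^ v) / v.factorial * Real.exp (R / 2) / 2 := by
  have hhalf : |s / 2| ≤ R / 2 := by rw [abs_div, abs_two]; linarith
  have hnum : |(v : ℝ) * (s / 2) ^ (v - 1) - (s / 2) ^ v| ≤ v * (R / 2) ^ (v - 1) + (R / 2) ^ v :=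
    calc |(v : ℝ) * (s / 2) ^ (v - 1) - (s / 2) ^ v|
        ≤ v * |s / 2| ^ (v - 1) + |s / 2| ^ v := by
          simpa [abs_mul, abs_pow] using abs_sub ((v : ℝ) * (s / 2) ^ (v - 1)) ((s / 2) ^ v)
      _ ≤ v * (R / 2) ^ (v - 1) + (R / 2) ^ v := by gcongr
  have hexp : Real.exp (-s / 2) ≤ Real.exp (R / 2) := by
    gcongr; linarith [neg_abs_le s]
  rw [poissonWeightDeriv, abs_div, abs_mul, abs_div, Nat.abs_cast, abs_two, Real.abs_exp]
  gcongr ?_ / _ * ?_ / _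
  exact div_nonneg ((abs_nonneg _).trans hnum) v.factorial.cast_nonneg

theorem hasDerivAt_tsum_poissonWeight_mul {p : ℕ → ℝ} {M : ℝ} (hp : ∀ v, |p v| ≤ M) (s : ℝ) :
    HasDerivAt (fun s => ∑' v, poissonWeight s v * p v)
      (∑' v, poissonWeightDeriv s v * p v) s := by
  set R := |s| + 1
  have hbound : Summable fun v : ℕ =>
      ((v : ℝ) * (R / 2) ^ (v - 1) + (R / 2) ^ v) / v.factorial * Real.exp (R / 2) / 2 * M := by
    simp_rw [add_div]
    exact ((((summable_natCast_mul_pow_pred_div_factorial _).add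
      (Real.summable_pow_div_factorial _)).mul_right _).div_const _).mul_right _
  -- at `s = 0` only the term `v = 0` is nonzero
  have hsummable_zero : Summable fun v => poissonWeight 0 v * p v :=
    summable_of_ne_finset_zero (s := {0}) fun v hv => by
      simp [poissonWeight, zero_pow (Finset.notMem_singleton.1 hv)]
  refine hasDerivAt_tsum_of_isPreconnected hbound Metric.isOpen_ball
    (convex_ball 0 R).isPreconnected (fun v t _ => (hasDerivAt_poissonWeight v t).mul_const (p v))
    (fun v t ht => ?_) (Metric.mem_ball_self (by positivity)) hsummable_zero
    (mem_ball_zero_iff.2 (lt_add_one _))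
  have hderiv := abs_poissonWeightDeriv_le (mem_ball_zero_iff.1 ht).le v
  rw [Real.norm_eq_abs, abs_mul]
  exact mul_le_mul hderiv (hp v) (abs_nonneg _) ((abs_nonneg _).trans hderiv)

theorem tsum_poissonWeightDeriv_mul {s : ℝ} (hs : s ≠ 0) (p : ℕ → ℝ) :
    ∑' v, poissonWeightDeriv s v * p v =
      Real.exp (-s / 2) * (∑' v : ℕ, s ^ ((v : ℤ) - 1) * (2 : ℝ) ^ (-(v : ℤ)) *
        (2 * (v : ℝ) - s) * p v / v.factorial) / 2 := by
  rw [← tsum_mul_left, ← tsum_div_const]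
  refine tsum_congr fun v => ?_
  rw [poissonWeightDeriv, natCast_mul_half_pow_pred_sub_half_pow hs]
  ring

theorem power_influence_function_formula_general
    (r : ℕ)
    (A : Matrix (Fin r) (Fin r) ℝ) (hAsym : A.IsSymm)
    (u w : Fin r → ℝ) (hs₀ : 0 < u ⬝ᵥ A.mulVec u)
    (p : ℕ → ℝ) (hp : ∀ v, 0 ≤ p v ∧ p v ≤ 1) :
    HasDerivAt
      (fun ε : ℝ => ∑' v : ℕ,
        (((u + ε • w) ⬝ᵥ A.mulVec (u + ε • w)) / 2) ^ v / (Nat.factorial v) *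
          Real.exp (-((u + ε • w) ⬝ᵥ A.mulVec (u + ε • w)) / 2) * p v)
      ((Real.exp (-(u ⬝ᵥ A.mulVec u) / 2) *
          ∑' v : ℕ, (u ⬝ᵥ A.mulVec u) ^ ((v : ℤ) - 1) * (2 : ℝ) ^ (-(v : ℤ)) *
            (2 * (v : ℝ) - u ⬝ᵥ A.mulVec u) * p v / (Nat.factorial v)) *
        (u ⬝ᵥ A.mulVec w))
      0 := by
  have hq := hasDerivAt_add_smul_dotProduct_mulVec_add_smul A u w
  rw [hAsym.dotProduct_mulVec_comm u w] at hq
  have hp_abs : ∀ v, |p v| ≤ 1 := fun v => (abs_of_nonneg (hp v).1).trans_le (hp v).2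
  have hβ := (hasDerivAt_tsum_poissonWeight_mul hp_abs (u ⬝ᵥ A *ᵥ u)).comp_of_eq 0 hq (by simp)
  rw [tsum_poissonWeightDeriv_mul hs₀.ne'] at hβ
  refine hβ.congr_deriv ?_
  ring

/-- The power influence function of the Wald-type test: with
`q(ε) = (u + εw)ᵀ A (u + εw)`, `β(ε) = Σ_v (q(ε)/2)^v/v! · e^{−q(ε)/2} · p_v`
is differentiable at `ε = 0` with derivative `C*(s₀) · uᵀ A w`, where `s₀ = uᵀ A u > 0`
and `C*(s) = e^{−s/2} Σ_v s^{v−1} 2^{−v} (2v − s) p_v / v!`. -/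
theorem power_influence_function_formula
    (r : ℕ) (hr : 1 ≤ r)
    (A : Matrix (Fin r) (Fin r) ℝ) (hAsym : A.IsSymm) (hApsd : A.PosSemidef)
    (u w : Fin r → ℝ) (hs₀ : 0 < u ⬝ᵥ A.mulVec u)
    (p : ℕ → ℝ) (hp : ∀ v, 0 ≤ p v ∧ p v ≤ 1) :
    HasDerivAt
      (fun ε : ℝ => ∑' v : ℕ,
        (((u + ε • w) ⬝ᵥ A.mulVec (u + ε • w)) / 2) ^ v / (Nat.factorial v) *
          Real.exp (-((u + ε • w) ⬝ᵥ A.mulVec (u + ε • w)) / 2) * p v)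
      ((Real.exp (-(u ⬝ᵥ A.mulVec u) / 2) *
          ∑' v : ℕ, (u ⬝ᵥ A.mulVec u) ^ ((v : ℤ) - 1) * (2 : ℝ) ^ (-(v : ℤ)) *
            (2 * (v : ℝ) - u ⬝ᵥ A.mulVec u) * p v / (Nat.factorial v)) *
        (u ⬝ᵥ A.mulVec w))
      0 :=
  power_influence_function_formula_general r A hAsym u w hs₀ p hp
end

section
/- Let U : ℝ → ℝ^k be differentiable in a neighborhood of 0 with derivative U' differentiable at 0, let m : ℝ^k → ℝ^r be twice continuously differentiable with m(U(0)) = 0, and let B be a symmetric r×r real matrix. Define w(ε) = m(U(ε))ᵀ B m(U(ε)). Then w is differentiable in a neighborhood of 0, w'(0) = 0, w' is differentiable at 0, and w''(0) = 2 · vᵀ B v, where v = Dm(U(0))(U'(0)) ∈ ℝ^r; equivalently, w''(0) = 2 · U'(0)ᵀ M B Mᵀ U'(0), where M is the k×r matrix with entries M_{ij} = ∂m_j(U(0))/∂θ_i. -/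
open Filter Topology Matrix

/-!
Write `g = m ∘ U`, so `w = gᵀ B g`. The product rule gives
`w' = g'ᵀ B g + gᵀ B g'` near `0`, which vanishes at `0` because `g 0 = 0`.
Differentiating once more, every term still containing `g 0` drops out and
`w''(0) = g'(0)ᵀ B g'(0) + g'(0)ᵀ B g'(0)`; the chain rule identifies
`g'(0) = Dm(U 0)(U'(0))`.
-/

section ProductRule

variable {𝕜 ι : Type*} [NontriviallyNormedField 𝕜] [Fintype ι]
  {f g : 𝕜 → ι → 𝕜} {f' g' : ι → 𝕜} {x : 𝕜}

theorem HasDerivAt.dotProduct (hf : HasDerivAt f f' x) (hg : HasDerivAt g g' x) :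
    HasDerivAt (fun t => f t ⬝ᵥ g t) (f' ⬝ᵥ g x + f x ⬝ᵥ g') x := by
  have hsum := HasDerivAt.fun_sum (u := Finset.univ) fun i _ =>
    (hasDerivAt_pi.mp hf i).fun_mul (hasDerivAt_pi.mp hg i)
  simpa only [_root_.dotProduct, Finset.sum_add_distrib] using hsum

theorem HasDerivAt.matrix_mulVec (B : Matrix ι ι 𝕜) (hf : HasDerivAt f f' x) :
    HasDerivAt (fun t => B *ᵥ f t) (B *ᵥ f') x :=
  hasDerivAt_pi.mpr fun i => by
    simpa [mulVec] using (hasDerivAt_const x (B i)).dotProduct hf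

end ProductRule

section QuadraticForm

variable {𝕜 ι : Type*} [NontriviallyNormedField 𝕜] [Fintype ι] (B : Matrix ι ι 𝕜)
  {g g' : 𝕜 → ι → 𝕜} {x : 𝕜}

theorem quadForm_comp_derivs_of_eq_zero (hg : ∀ᶠ t in 𝓝 x, HasDerivAt g (g' t) t)
    (hg' : DifferentiableAt 𝕜 g' x) (hx : g x = 0) :
    (∀ᶠ t in 𝓝 x, DifferentiableAt 𝕜 (fun s => g s ⬝ᵥ B *ᵥ g s) t) ∧
      deriv (fun s => g s ⬝ᵥ B *ᵥ g s) x = 0 ∧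
      DifferentiableAt 𝕜 (deriv fun s => g s ⬝ᵥ B *ᵥ g s) x ∧
      deriv (deriv fun s => g s ⬝ᵥ B *ᵥ g s) x = 2 * (g' x ⬝ᵥ B *ᵥ g' x) := by
  set D : 𝕜 → 𝕜 := fun t => g' t ⬝ᵥ B *ᵥ g t + g t ⬝ᵥ B *ᵥ g' t
  have hw : ∀ᶠ t in 𝓝 x, HasDerivAt (fun s => g s ⬝ᵥ B *ᵥ g s) (D t) t :=
    hg.mono fun t ht => ht.dotProduct (ht.matrix_mulVec B)
  have hderiv : deriv (fun s => g s ⬝ᵥ B *ᵥ g s) =ᶠ[𝓝 x] D := hw.mono fun t ht => ht.deriv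
  have hgx : HasDerivAt g (g' x) x := hg.self_of_nhds
  have hD : HasDerivAt D (2 * (g' x ⬝ᵥ B *ᵥ g' x)) x := by
    have h := (hg'.hasDerivAt.dotProduct (hgx.matrix_mulVec B)).fun_add
      (hgx.dotProduct (hg'.hasDerivAt.matrix_mulVec B))
    simpa only [hx, mulVec_zero, dotProduct_zero, zero_dotProduct, add_zero, zero_add,
      ← two_mul] using h
  refine ⟨hw.mono fun t ht => ht.differentiableAt, ?_, hderiv.differentiableAt_iff.mpr
    hD.differentiableAt, hderiv.deriv_eq.trans hD.deriv⟩
  simp [hw.self_of_nhds.deriv, D, hx]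

end QuadraticForm

theorem differentiableAt_fderiv_apply_deriv {𝕜 E F : Type*} [NontriviallyNormedField 𝕜]
    [NormedAddCommGroup E] [NormedSpace 𝕜 E] [NormedAddCommGroup F] [NormedSpace 𝕜 F]
    {m : E → F} {U : 𝕜 → E} {x : 𝕜} (hm : ContDiff 𝕜 2 m) (hU : DifferentiableAt 𝕜 U x)
    (hU' : DifferentiableAt 𝕜 (deriv U) x) :
    DifferentiableAt 𝕜 (fun t => fderiv 𝕜 m (U t) (deriv U t)) x :=
  (((hm.fderiv_right (m := 1) le_rfl).differentiable one_ne_zero).differentiableAt.comp x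
    hU).clm_apply hU'

theorem wald_functional_influence_functions_general
    (k r : ℕ)
    (U : ℝ → Fin k → ℝ)
    (hU : ∀ᶠ ε in 𝓝 (0 : ℝ), DifferentiableAt ℝ U ε)
    (hU' : DifferentiableAt ℝ (deriv U) 0)
    (m : (Fin k → ℝ) → Fin r → ℝ) (hm : ContDiff ℝ 2 m)
    (hm0 : m (U 0) = 0)
    (B : Matrix (Fin r) (Fin r) ℝ) :
    (∀ᶠ ε in 𝓝 (0 : ℝ),
        DifferentiableAt ℝ (fun ε' : ℝ => m (U ε') ⬝ᵥ B.mulVec (m (U ε'))) ε) ∧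
      deriv (fun ε' : ℝ => m (U ε') ⬝ᵥ B.mulVec (m (U ε'))) 0 = 0 ∧
      DifferentiableAt ℝ (deriv (fun ε' : ℝ => m (U ε') ⬝ᵥ B.mulVec (m (U ε')))) 0 ∧
      deriv (deriv (fun ε' : ℝ => m (U ε') ⬝ᵥ B.mulVec (m (U ε')))) 0 =
        2 * (fderiv ℝ m (U 0) (deriv U 0) ⬝ᵥ B.mulVec (fderiv ℝ m (U 0) (deriv U 0))) := by
  have hm_diff : Differentiable ℝ m := hm.differentiable two_ne_zero
  have hmU : ∀ᶠ ε in 𝓝 (0 : ℝ),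
      HasDerivAt (fun t => m (U t)) (fderiv ℝ m (U ε) (deriv U ε)) ε :=
    hU.mono fun ε hε => (hm_diff (U ε)).hasFDerivAt.comp_hasDerivAt ε hε.hasDerivAt
  exact quadForm_comp_derivs_of_eq_zero B hmU
    (differentiableAt_fderiv_apply_deriv hm hU.self_of_nhds hU') hm0

/-- First- and second-order influence functions of the Wald-type test functional
`w(ε) = m(U(ε))ᵀ B m(U(ε))` along a contamination path `U` with `m(U(0)) = 0`:
`w` is differentiable near `0`, `w'(0) = 0`, `w'` is differentiable at `0`, and
`w''(0) = 2 vᵀ B v` with `v = Dm(U(0))(U'(0))`. -/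
theorem wald_functional_influence_functions
    (k r : ℕ) (hk : 1 ≤ k) (hr : 1 ≤ r)
    (U : ℝ → Fin k → ℝ)
    (hU : ∀ᶠ ε in 𝓝 (0 : ℝ), DifferentiableAt ℝ U ε)
    (hU' : DifferentiableAt ℝ (deriv U) 0)
    (m : (Fin k → ℝ) → Fin r → ℝ) (hm : ContDiff ℝ 2 m)
    (hm0 : m (U 0) = 0)
    (B : Matrix (Fin r) (Fin r) ℝ) (hBsym : B.IsSymm) :
    (∀ᶠ ε in 𝓝 (0 : ℝ),
        DifferentiableAt ℝ (fun ε' : ℝ => m (U ε') ⬝ᵥ B.mulVec (m (U ε'))) ε) ∧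
      deriv (fun ε' : ℝ => m (U ε') ⬝ᵥ B.mulVec (m (U ε'))) 0 = 0 ∧
      DifferentiableAt ℝ (deriv (fun ε' : ℝ => m (U ε') ⬝ᵥ B.mulVec (m (U ε')))) 0 ∧
      deriv (deriv (fun ε' : ℝ => m (U ε') ⬝ᵥ B.mulVec (m (U ε')))) 0 =
        2 * (fderiv ℝ m (U 0) (deriv U 0) ⬝ᵥ B.mulVec (fderiv ℝ m (U 0) (deriv U 0))) :=
  wald_functional_influence_functions_general k r U hU hU' m hm hm0 B
end
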